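/- arXiv:1908.05368 — 4 statements merged into one kernel-verified Lean document; each statement's English description precedes it below -/
import Mathlib

section
/- The maximum number of regions into which d hyperplanes (each through arbitrary positions) can partition ℝ^k is C(d,k) = binom(d,0) + binom(d,1) + ... + binom(d,k). In particular C(d,k) ≤ d^k + 1. -/
/-!
The regions of an arrangement are exactly its nonempty sign cells: a cell is convex, hence
connected, and points with different sign vectors are separated by a hyperplane. So it
suffices to bound the number `r(m, n)` of sign vectors realized by `m` affine functionals on
a space of dimension `n`. Forgetting the last functional `ℓ` merges at most two realized
vectors, and it merges two only when the cell of the other functionals meets both sides of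
`ℓ = 0`, hence (by convexity) meets the hyperplane `ℓ = 0`, of dimension `n - 1`. Thus
`r(m + 1, n) ≤ r(m, n) + r(m, n - 1)`, and Pascal's rule closes the induction.

For the lower bound take the hyperplanes `⟪(1, t, …, t^(k-1)), x⟫ = -t^k` for
`t = 0, …, d - 1`: at `x` the defining functional takes the value `p(t)`, where `p` is the
monic polynomial of degree `k` with lower coefficients `x`. For a set `R` of at most `k`
indices the monic polynomial with roots `r + 1/2` (`r ∈ R`), padded by powers of `X + 1`,
has sign `(-1)^#{r ∈ R | t ≤ r}` at `t`, and these parity vectors determine `R`.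
-/

open scoped RealInnerProductSpace

open Set Module

section Counting

open Finset

theorem sum_range_choose_succ (m n : ℕ) :
    ∑ j ∈ range (n + 1), (m + 1).choose j =
      ∑ j ∈ range (n + 1), m.choose j + ∑ j ∈ range n, m.choose j := by
  rw [sum_range_succ' _ n, sum_range_succ' (fun j => m.choose j) n]
  simp only [Nat.choose_succ_succ, sum_add_distrib, Nat.choose_zero_right]
  ring

theorem sum_range_choose_le_pow_add_one (d k : ℕ) :
    ∑ j ∈ range (k + 1), d.choose j ≤ d ^ k + 1 := by
  rcases Nat.eq_zero_or_pos k with rfl | hk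
  · simp
  induction k, hk using Nat.le_induction with
  | base => simp [sum_range_succ, add_comm]
  | succ k hk ih =>
    have hchoose : d.choose (k + 1) ≤ d ^ k * (d - 1) :=
      calc d.choose (k + 1) ≤ d.choose (k + 1) * (k + 1) := Nat.le_mul_of_pos_right _ k.succ_pos
        _ = d.choose k * (d - k) := Nat.choose_succ_right_eq d k
        _ ≤ d ^ k * (d - 1) := Nat.mul_le_mul (Nat.choose_le_pow d k) (by omega)
    have hpow : d ^ k + d ^ k * (d - 1) ≤ d ^ (k + 1) := by
      rcases d with _ | d
      · simp [Nat.pos_iff_ne_zero.mp hk]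
      · exact le_of_eq (by rw [Nat.add_sub_cancel]; ring)
    rw [sum_range_succ]
    omega

theorem ncard_le_ncard_snoc_union_add_ncard_snoc_inter {m : ℕ} (P : Set (Fin (m + 1) → Bool)) :
    P.ncard ≤ ({s | Fin.snoc s true ∈ P} ∪ {s | Fin.snoc s false ∈ P}).ncard +
      ({s | Fin.snoc s true ∈ P} ∩ {s | Fin.snoc s false ∈ P}).ncard := by
  set A : Bool → Set (Fin m → Bool) := fun b => {s | Fin.snoc s b ∈ P}
  have hcover : P ⊆ (Fin.snoc · true) '' A true ∪ (Fin.snoc · false) '' A false := by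
    intro s hs
    rw [← Fin.snoc_init_self s] at hs ⊢
    generalize s (Fin.last m) = b at hs ⊢
    cases b
    · exact Or.inr ⟨_, hs, rfl⟩
    · exact Or.inl ⟨_, hs, rfl⟩
  calc P.ncard ≤ ((Fin.snoc · true) '' A true ∪ (Fin.snoc · false) '' A false).ncard :=
        Set.ncard_le_ncard hcover
    _ ≤ (A true).ncard + (A false).ncard :=
        (Set.ncard_union_le _ _).trans (add_le_add Set.ncard_image_le Set.ncard_image_le)
    _ = (A true ∪ A false).ncard + (A true ∩ A false).ncard :=
        (Set.ncard_union_add_ncard_inter _ _).symm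

end Counting

def signRay (b : Bool) : Set ℝ := if b then Ioi 0 else Iio 0

theorem mem_signRay_iff {t : ℝ} {b : Bool} : t ∈ signRay b ↔ t ≠ 0 ∧ decide (0 < t) = b := by
  cases b <;> simp only [signRay, if_true, Bool.false_eq_true, if_false, mem_Ioi, mem_Iio,
    decide_eq_true_eq, decide_eq_false_iff_not, not_lt]
  · exact ⟨fun h => ⟨h.ne, h.le⟩, fun h => lt_of_le_of_ne h.2 h.1⟩
  · exact ⟨fun h => ⟨h.ne', h⟩, And.right⟩

theorem convex_signRay (b : Bool) : Convex ℝ (signRay b) := by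
  cases b
  · exact convex_Iio 0
  · exact convex_Ioi 0

theorem isOpen_signRay (b : Bool) : IsOpen (signRay b) := by
  cases b
  · exact isOpen_Iio
  · exact isOpen_Ioi

theorem mem_signRay_of_sign_eq_neg_one_pow {t : ℝ} {n : ℕ} (h : SignType.sign t = (-1) ^ n) :
    t ∈ signRay (decide (Even n)) := by
  rcases n.even_or_odd with hn | hn
  · rw [hn.neg_one_pow, sign_eq_one_iff] at h
    simpa [signRay, hn] using h
  · rw [hn.neg_one_pow, sign_eq_neg_one_iff] at h
    simpa [signRay, Nat.not_even_iff_odd.mpr hn] using h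

section SignCell

variable {ι E : Type*} [AddCommGroup E] [Module ℝ E]

def signCell (f : ι → E →ᵃ[ℝ] ℝ) (s : ι → Bool) : Set E := ⋂ i, f i ⁻¹' signRay (s i)

def signPatterns (f : ι → E →ᵃ[ℝ] ℝ) : Set (ι → Bool) := {s | (signCell f s).Nonempty}

theorem mem_signCell_iff {f : ι → E →ᵃ[ℝ] ℝ} {s : ι → Bool} {x : E} :
    x ∈ signCell f s ↔ (∀ i, f i x ≠ 0) ∧ (fun i => decide (0 < f i x)) = s := by
  simp only [signCell, mem_iInter, mem_preimage, mem_signRay_iff, funext_iff]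
  exact forall_and

theorem convex_signCell (f : ι → E →ᵃ[ℝ] ℝ) (s : ι → Bool) : Convex ℝ (signCell f s) :=
  convex_iInter fun i => (convex_signRay (s i)).affine_preimage (f i)

theorem signCell_comp {F : Type*} [AddCommGroup F] [Module ℝ F] (f : ι → E →ᵃ[ℝ] ℝ)
    (φ : F →ᵃ[ℝ] E) (s : ι → Bool) :
    signCell (fun i => (f i).comp φ) s = φ ⁻¹' signCell f s := by
  ext x
  simp [signCell]

theorem signCell_snoc {m : ℕ} (f : Fin (m + 1) → E →ᵃ[ℝ] ℝ) (s : Fin m → Bool) (b : Bool) :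
    signCell f (Fin.snoc s b) = signCell (Fin.init f) s ∩ f (Fin.last m) ⁻¹' signRay b := by
  ext x
  simp [signCell, Fin.forall_fin_succ', Fin.init]

theorem exists_mem_signCell_eq_zero {g : ι → E →ᵃ[ℝ] ℝ} {s : ι → Bool} {ℓ : E →ᵃ[ℝ] ℝ}
    {x y : E} (hx : x ∈ signCell g s) (hy : y ∈ signCell g s) (hℓx : 0 < ℓ x) (hℓy : ℓ y < 0) :
    ∃ z ∈ signCell g s, ℓ z = 0 := by
  have hgap : 0 < ℓ x - ℓ y := by linarith
  have ht : ℓ x / (ℓ x - ℓ y) ∈ Icc (0 : ℝ) 1 :=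
    ⟨by positivity, (div_le_one hgap).mpr (by linarith)⟩
  refine ⟨AffineMap.lineMap x y _, (convex_signCell g s).lineMap_mem hx hy ht, ?_⟩
  rw [AffineMap.apply_lineMap, AffineMap.lineMap_apply_ring']
  field_simp
  ring

theorem exists_signPatterns_superset_of_linear_ne_zero [FiniteDimensional ℝ E]
    (g : ι → E →ᵃ[ℝ] ℝ) {ℓ : E →ᵃ[ℝ] ℝ} (hℓ : ℓ.linear ≠ 0) :
    ∃ (K : Submodule ℝ E) (g' : ι → K →ᵃ[ℝ] ℝ), finrank ℝ K + 1 = finrank ℝ E ∧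
      {s | ∃ z ∈ signCell g s, ℓ z = 0} ⊆ signPatterns g' := by
  obtain ⟨z₀, hz₀⟩ : ∃ z₀, ℓ z₀ = 0 := by
    obtain ⟨v, hv⟩ := LinearMap.surjective hℓ (-ℓ 0)
    exact ⟨v +ᵥ (0 : E), by rw [AffineMap.map_vadd, hv, vadd_eq_add, neg_add_cancel]⟩
  set K := LinearMap.ker ℓ.linear
  set φ : K →ᵃ[ℝ] E := AffineMap.const ℝ K z₀ + K.subtype.toAffineMap
  refine ⟨K, fun i => (g i).comp φ, Module.Dual.finrank_ker_add_one_of_ne_zero hℓ, ?_⟩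
  rintro s ⟨z, hz, hℓz⟩
  have hmem : z - z₀ ∈ K := by
    rw [LinearMap.mem_ker, ← vsub_eq_sub, AffineMap.linearMap_vsub, hℓz, hz₀, vsub_self]
  refine ⟨⟨z - z₀, hmem⟩, ?_⟩
  rw [signCell_comp]
  simpa [φ] using hz

end SignCell

section UpperBound

variable {E : Type*} [AddCommGroup E] [Module ℝ E]

theorem snoc_mem_signPatterns_iff {m : ℕ} {f : Fin (m + 1) → E →ᵃ[ℝ] ℝ} {s : Fin m → Bool}
    {b : Bool} : Fin.snoc s b ∈ signPatterns f ↔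
      (signCell (Fin.init f) s ∩ f (Fin.last m) ⁻¹' signRay b).Nonempty := by
  rw [signPatterns, Set.mem_ofPred_eq, signCell_snoc]

theorem ncard_signPatterns_le [FiniteDimensional ℝ E] {m : ℕ} (f : Fin m → E →ᵃ[ℝ] ℝ) :
    (signPatterns f).ncard ≤ ∑ j ∈ Finset.range (finrank ℝ E + 1), m.choose j := by
  induction m generalizing E with
  | zero =>
    exact (Set.ncard_le_one_of_subsingleton _).trans (by simp [Finset.sum_range_succ'])
  | succ m ih =>
    set ℓ := f (Fin.last m)
    set A : Bool → Set (Fin m → Bool) := fun b => {s | Fin.snoc s b ∈ signPatterns f}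
    have hunion : (A true ∪ A false).ncard ≤ ∑ j ∈ Finset.range (finrank ℝ E + 1), m.choose j := by
      refine (Set.ncard_le_ncard (union_subset ?_ ?_)).trans (ih (Fin.init f)) <;>
      exact fun s hs => (snoc_mem_signPatterns_iff.mp hs).mono inter_subset_left
    have hinter : (A true ∩ A false).ncard ≤ ∑ j ∈ Finset.range (finrank ℝ E), m.choose j := by
      by_cases hℓ : ℓ.linear = 0
      · suffices A true ∩ A false = ∅ by simp [this]
        refine eq_empty_of_forall_notMem fun s ⟨hst, hsf⟩ => ?_
        obtain ⟨x, -, hx⟩ := snoc_mem_signPatterns_iff.mp hst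
        obtain ⟨y, -, hy⟩ := snoc_mem_signPatterns_iff.mp hsf
        have hxy : ℓ x - ℓ y = 0 := by
          rw [← vsub_eq_sub, ← AffineMap.linearMap_vsub, hℓ, LinearMap.zero_apply]
        linarith [show 0 < ℓ x from hx, show ℓ y < 0 from hy]
      · obtain ⟨K, g, hK, hsub⟩ := exists_signPatterns_superset_of_linear_ne_zero (Fin.init f) hℓ
        have hcross : A true ∩ A false ⊆ {s | ∃ z ∈ signCell (Fin.init f) s, ℓ z = 0} := by
          rintro s ⟨hst, hsf⟩
          obtain ⟨x, hx, hℓx⟩ := snoc_mem_signPatterns_iff.mp hst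
          obtain ⟨y, hy, hℓy⟩ := snoc_mem_signPatterns_iff.mp hsf
          exact exists_mem_signCell_eq_zero hx hy hℓx hℓy
        calc (A true ∩ A false).ncard ≤ (signPatterns g).ncard :=
              Set.ncard_le_ncard (hcross.trans hsub)
          _ ≤ ∑ j ∈ Finset.range (finrank ℝ K + 1), m.choose j := ih g
          _ = ∑ j ∈ Finset.range (finrank ℝ E), m.choose j := by rw [hK]
    calc (signPatterns f).ncard ≤ (A true ∪ A false).ncard + (A true ∩ A false).ncard :=
          ncard_le_ncard_snoc_union_add_ncard_snoc_inter _
      _ ≤ _ := add_le_add hunion hinter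
      _ = _ := (sum_range_choose_succ m _).symm

end UpperBound

theorem card_connectedComponents_eq_card_range {X Y : Type*} [TopologicalSpace X]
    [TopologicalSpace Y] [DiscreteTopology Y] {σ : X → Y} (hσ : Continuous σ)
    (hfiber : ∀ y, IsPreconnected (σ ⁻¹' {y})) :
    Nat.card (ConnectedComponents X) = Nat.card (range σ) := by
  have hinj : Function.Injective hσ.connectedComponentsLift := by
    refine ConnectedComponents.surjective_coe.forall₂.2 fun x y hxy => ?_
    rw [hσ.connectedComponentsLift_apply_coe, hσ.connectedComponentsLift_apply_coe] at hxy
    rw [ConnectedComponents.coe_eq_coe']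
    exact (hfiber (σ y)).subset_connectedComponent rfl hxy
  rw [← Nat.card_range_of_injective hinj, ← ConnectedComponents.surjective_coe.range_comp,
    hσ.connectedComponentsLift_comp_coe]

section Regions

variable {ι E : Type*} [AddCommGroup E] [Module ℝ E] [TopologicalSpace E]
  [ContinuousAdd E] [ContinuousSMul ℝ E]

theorem card_connectedComponents_eq_ncard_signPatterns [Finite ι] (f : ι → E →ᵃ[ℝ] ℝ)
    (hf : ∀ i, Continuous (f i)) :
    Nat.card (ConnectedComponents {x : E | ∀ i, f i x ≠ 0}) = (signPatterns f).ncard := by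
  set σ : {x : E | ∀ i, f i x ≠ 0} → ι → Bool := fun x i => decide (0 < f i x)
  have hfiber s : σ ⁻¹' {s} = Subtype.val ⁻¹' signCell f s := by
    ext x
    simp only [mem_preimage, mem_singleton_iff, mem_signCell_iff, σ]
    exact (and_iff_right x.2).symm
  have hrange : range σ = signPatterns f := by
    ext s
    simp only [mem_range, signPatterns, Set.mem_ofPred_eq, Set.Nonempty, mem_signCell_iff]
    exact ⟨fun ⟨x, hx⟩ => ⟨x, x.2, hx⟩, fun ⟨x, hx, hs⟩ => ⟨⟨x, hx⟩, hs⟩⟩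
  have hopen s : IsOpen (signCell f s) :=
    isOpen_iInter_of_finite fun i => (isOpen_signRay (s i)).preimage (hf i)
  have hconn s : IsPreconnected (σ ⁻¹' {s}) := by
    rw [hfiber, ← Topology.IsInducing.subtypeVal.isPreconnected_image, Subtype.image_preimage_coe,
      inter_eq_right.mpr (show signCell f s ⊆ {x | ∀ i, f i x ≠ 0} from
        fun x hx => (mem_signCell_iff.mp hx).1)]
    exact (convex_signCell f s).isPreconnected
  have hσ : Continuous σ :=
    continuous_discrete_rng.mpr fun s => hfiber s ▸ (hopen s).preimage continuous_subtype_val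
  rw [card_connectedComponents_eq_card_range hσ hconn, hrange, Nat.card_coe_set_eq]

end Regions

section InnerProduct

variable {E : Type*} [NormedAddCommGroup E] [InnerProductSpace ℝ E]

noncomputable def innerSubConst (w : E) (b : ℝ) : E →ᵃ[ℝ] ℝ :=
  (innerₛₗ ℝ w).toAffineMap - AffineMap.const ℝ E b

@[simp]
theorem innerSubConst_apply (w : E) (b : ℝ) (x : E) : innerSubConst w b x = ⟪w, x⟫ - b := by
  simp [innerSubConst]

theorem card_regions_eq_ncard_signPatterns {ι : Type*} [Finite ι] (w : ι → E) (b : ι → ℝ) :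
    Nat.card (ConnectedComponents ↥((⋃ i, {x : E | ⟪w i, x⟫ = b i})ᶜ)) =
      (signPatterns fun i => innerSubConst (w i) (b i)).ncard := by
  have hregion : (⋃ i, {x : E | ⟪w i, x⟫ = b i})ᶜ =
      {x | ∀ i, innerSubConst (w i) (b i) x ≠ 0} := by
    ext x
    simp [sub_eq_zero]
  rw [hregion]
  refine card_connectedComponents_eq_ncard_signPatterns _ fun i => ?_
  simp only [funext (innerSubConst_apply (w i) (b i))]
  fun_prop

end InnerProduct

section ParityPolynomial

open Polynomial Finset

theorem Polynomial.Monic.eval_eq_sum_coeff_add_pow {p : ℝ[X]} {k : ℕ} (hp : p.Monic)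
    (hdeg : p.natDegree = k) (t : ℝ) :
    p.eval t = ∑ j : Fin k, p.coeff j * t ^ (j : ℕ) + t ^ k := by
  rw [eval_eq_sum_range, hdeg, Finset.sum_range_succ, ← hdeg, hp.coeff_natDegree, hdeg,
    Fin.sum_univ_eq_sum_range (fun j => p.coeff j * t ^ j), one_mul]

noncomputable def parityPoly (k : ℕ) (R : Finset ℕ) : ℝ[X] :=
  (∏ r ∈ R, (X - C ((r : ℝ) + 1 / 2))) * (X + C 1) ^ (k - #R)

variable {k : ℕ} {R : Finset ℕ}

theorem monic_parityPoly : (parityPoly k R).Monic :=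
  (monic_prod_of_monic _ _ fun _ _ => monic_X_sub_C _).mul ((monic_X_add_C 1).pow _)

theorem natDegree_parityPoly (h : #R ≤ k) : (parityPoly k R).natDegree = k := by
  rw [parityPoly, (monic_prod_of_monic _ _ fun _ _ => monic_X_sub_C _).natDegree_mul
    ((monic_X_add_C 1).pow _), natDegree_prod_of_monic _ _ fun _ _ => monic_X_sub_C _,
    natDegree_pow, natDegree_X_add_C]
  simp only [natDegree_X_sub_C, sum_const, smul_eq_mul, mul_one]
  omega

theorem sign_eval_parityPoly (i : ℕ) :
    SignType.sign ((parityPoly k R).eval (i : ℝ)) = (-1) ^ #(R.filter (i ≤ ·)) := by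
  have hfactor (r : ℕ) : SignType.sign ((i : ℝ) - ((r : ℝ) + 1 / 2)) = if i ≤ r then -1 else 1 := by
    split_ifs with h
    · have : (i : ℝ) ≤ r := by exact_mod_cast h
      exact sign_eq_neg_one_iff.mpr (by linarith)
    · have : (r : ℝ) + 1 ≤ i := by exact_mod_cast not_le.mp h
      exact sign_eq_one_iff.mpr (by linarith)
  have hpos : SignType.sign ((X + C 1 : ℝ[X]).eval (i : ℝ)) = 1 :=
    sign_eq_one_iff.mpr (by simp only [eval_add, eval_X, eval_C]; positivity)
  rw [parityPoly, eval_mul, eval_prod, eval_pow, sign_mul, sign_pow, hpos, one_pow, mul_one,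
    ← signHom_apply, map_prod]
  simp only [signHom_apply, eval_sub, eval_X, eval_C, hfactor, prod_ite, prod_const, one_pow,
    mul_one]

end ParityPolynomial

section MomentCurve

open Finset

def momentVec (k : ℕ) (t : ℝ) : EuclideanSpace ℝ (Fin k) := WithLp.toLp 2 fun j => t ^ (j : ℕ)

theorem inner_momentVec_toLp {k : ℕ} (t : ℝ) (c : Fin k → ℝ) :
    ⟪momentVec k t, WithLp.toLp 2 c⟫ = ∑ j, c j * t ^ (j : ℕ) := by
  simp [momentVec, PiLp.inner_apply]

theorem momentVec_ne_zero {k : ℕ} (hk : 0 < k) (t : ℝ) : momentVec k t ≠ 0 := by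
  intro h
  simpa [momentVec] using congrArg (· ⟨0, hk⟩) h

def parityVector (d : ℕ) (R : Finset ℕ) : Fin d → Bool :=
  fun i => decide (Even #(R.filter (i.val ≤ ·)))

theorem mem_iff_parity_change (T : Finset ℕ) (i : ℕ) :
    i ∈ T ↔ ¬(Even #(T.filter (i ≤ ·)) ↔ Even #(T.filter (i + 1 ≤ ·))) := by
  have hcard : #(T.filter (i ≤ ·)) = #(T.filter (i + 1 ≤ ·)) + if i ∈ T then 1 else 0 := by
    rw [card_filter, card_filter, ← sum_ite_eq' T i (fun _ => 1), ← sum_add_distrib]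
    refine sum_congr rfl fun r _ => ?_
    split_ifs <;> omega
  rw [hcard]
  split_ifs with h <;> simp only [h, Nat.even_add_one, add_zero] <;> tauto

theorem injOn_parityVector (d : ℕ) : Set.InjOn (parityVector d) {R | R ⊆ range d} := by
  intro R hR S hS hRS
  have hparity i : Even #(R.filter (i ≤ ·)) ↔ Even #(S.filter (i ≤ ·)) := by
    by_cases hi : i < d
    · simpa [parityVector] using congrFun hRS ⟨i, hi⟩
    · have hempty (T : Finset ℕ) (hT : T ⊆ range d) : T.filter (i ≤ ·) = ∅ :=
        filter_eq_empty_iff.mpr fun r hr => by have := mem_range.mp (hT hr); omega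
      rw [hempty R hR, hempty S hS]
  ext i
  rw [mem_iff_parity_change, mem_iff_parity_change, hparity, hparity]

theorem parityVector_mem_signPatterns {k d : ℕ} {R : Finset ℕ} (hR : #R ≤ k) :
    parityVector d R ∈
      signPatterns fun i : Fin d => innerSubConst (momentVec k i) (-(i : ℝ) ^ k) := by
  set p := parityPoly k R
  refine ⟨WithLp.toLp 2 fun j => p.coeff j, Set.mem_iInter.mpr fun i => ?_⟩
  have heval : innerSubConst (momentVec k i) (-(i : ℝ) ^ k) (WithLp.toLp 2 fun j => p.coeff j) =
      p.eval (i : ℝ) := by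
    rw [innerSubConst_apply, inner_momentVec_toLp,
      monic_parityPoly.eval_eq_sum_coeff_add_pow (natDegree_parityPoly hR), sub_neg_eq_add]
  rw [Set.mem_preimage, heval]
  exact mem_signRay_of_sign_eq_neg_one_pow (sign_eval_parityPoly i)

theorem sum_range_choose_le_ncard_signPatterns_momentVec (k d : ℕ) :
    ∑ j ∈ range (k + 1), d.choose j ≤
      (signPatterns fun i : Fin d => innerSubConst (momentVec k i) (-(i : ℝ) ^ k)).ncard := by
  set Q := (range (k + 1)).biUnion fun j => powersetCard j (range d)
  have hQ : #Q = ∑ j ∈ range (k + 1), d.choose j := by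
    rw [card_biUnion fun j _ l _ hjl => pairwise_disjoint_powersetCard _ hjl]
    simp
  have hmemQ {R} (hR : R ∈ Q) : R ⊆ range d ∧ #R ≤ k := by
    obtain ⟨j, hj, hR⟩ := mem_biUnion.mp hR
    rw [mem_powersetCard] at hR
    exact ⟨hR.1, hR.2.trans_le (Nat.lt_succ_iff.mp (mem_range.mp hj))⟩
  rw [← hQ, ← Set.ncard_coe_finset]
  exact Set.ncard_le_ncard_of_injOn (parityVector d)
    (fun R hR => parityVector_mem_signPatterns (hmemQ hR).2)
    ((injOn_parityVector d).mono fun R hR => (hmemQ hR).1)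

end MomentCurve

/-- the maximum number of regions (connected components of the
complement) into which `dd` affine hyperplanes can partition `ℝ^k` is
`C(dd, k) = Σ_{j=0}^{k} (dd choose j)`: this is an upper bound for every
arrangement, it is attained by some arrangement, and `C(dd, k) ≤ dd^k + 1`. -/
theorem stmt_1 (k dd : ℕ) (hk : 0 < k) :
    (∀ (w : Fin dd → EuclideanSpace ℝ (Fin k)) (b : Fin dd → ℝ),
      (∀ i, w i ≠ 0) →
      Nat.card (ConnectedComponents
        ↥((⋃ i, {x : EuclideanSpace ℝ (Fin k) | ⟪w i, x⟫ = b i})ᶜ)) ≤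
        ∑ j ∈ Finset.range (k + 1), dd.choose j) ∧
    (∃ (w : Fin dd → EuclideanSpace ℝ (Fin k)) (b : Fin dd → ℝ),
      (∀ i, w i ≠ 0) ∧
      Nat.card (ConnectedComponents
        ↥((⋃ i, {x : EuclideanSpace ℝ (Fin k) | ⟪w i, x⟫ = b i})ᶜ)) =
        ∑ j ∈ Finset.range (k + 1), dd.choose j) ∧
    (∑ j ∈ Finset.range (k + 1), dd.choose j) ≤ dd ^ k + 1 := by
  have hupper (w : Fin dd → EuclideanSpace ℝ (Fin k)) (b : Fin dd → ℝ) :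
      (signPatterns fun i => innerSubConst (w i) (b i)).ncard ≤
        ∑ j ∈ Finset.range (k + 1), dd.choose j := by
    simpa using ncard_signPatterns_le fun i => innerSubConst (w i) (b i)
  refine ⟨fun w b _ => ?_, ⟨fun i => momentVec k i, fun i => -(i : ℝ) ^ k,
    fun i => momentVec_ne_zero hk _, ?_⟩, sum_range_choose_le_pow_add_one dd k⟩
  · rw [card_regions_eq_ncard_signPatterns]
    exact hupper w b
  · rw [card_regions_eq_ncard_signPatterns]
    exact (hupper _ _).antisymm (sum_range_choose_le_ncard_signPatterns_momentVec k dd)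
end

section
/- For k, d with d/k a positive integer, there exists a 3-layer ReLU network G: ℝ^{k+1} → ℝ^d with no offsets such that every nonnegative k-group sparse vector in the unit Euclidean ball of ℝ^d lies in the range of G. Specifically, with third-layer outputs Γ_r(x_i, z) = σ(σ(σ(x_i) - 2σ(rz)) - 2σ(σ(x_i) - 2σ(rz) - σ(z))) for i ∈ [k], r ∈ [d/k], fixing z = 1 yields, for each i, a sequence of d/k non-overlapping triangle functions of x_i of width 2 and height 1, so that every nonnegative k-group sparse vector in B₂^d(1) equals G([x₁,…,x_k,1]) for some choice of x₁,…,x_k ≥ 0. -/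
/-- The index of the `r`-th entry of the `i`-th block, when `ℝ^(k q)` is divided
into `k` consecutive blocks of size `q`. -/
def blockIdx {k q : ℕ} (i : Fin k) (r : Fin q) : Fin (k * q) :=
  ⟨i * q + r, by
    have hi := i.2
    have hr := r.2
    calc (i : ℕ) * q + r < i * q + q := by omega
      _ = ((i : ℕ) + 1) * q := by ring
      _ ≤ k * q := Nat.mul_le_mul_right q hi⟩

open Finset

lemma sum_single_ite {N : ℕ} (f : Fin N → ℝ) (a : ℕ) (ha : a < N) (p : ℝ) :
    ∑ m : Fin N, (if (m : ℕ) = a then p else 0) * f m = p * f ⟨a, ha⟩ := by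
  rw [Finset.sum_eq_single (⟨a, ha⟩ : Fin N)]
  · simp
  · intro b _ hb
    rw [if_neg, zero_mul]
    simpa [Fin.ext_iff] using hb
  · simp

lemma tri_mid (t : ℝ) (h0 : 0 ≤ t) (h1 : t ≤ 1) :
    max (max t 0 - 2 * max (t - 1) 0) 0 = t := by
  rw [max_eq_right (by linarith : t - 1 ≤ 0), max_eq_left h0, mul_zero, sub_zero,
    max_eq_left h0]

lemma tri_out (t : ℝ) (h : t ≤ 0 ∨ 2 ≤ t) :
    max (max t 0 - 2 * max (t - 1) 0) 0 = 0 := by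
  rcases h with h | h
  · rw [max_eq_right h, max_eq_right (by linarith : t - 1 ≤ 0)]
    norm_num
  · rw [show max (t - 1) 0 = t - 1 from max_eq_left (by linarith),
      show max t 0 = t from max_eq_left (by linarith)]
    exact max_eq_right (by linarith)

noncomputable def W2 (k q : ℕ) : Matrix (Fin (2 * (k * q))) (Fin (k + 1)) ℝ :=
  fun j₂ m =>
    (if (m : ℕ) = ((j₂ : ℕ) % (k * q)) / q then 1 else 0) +
    (if (m : ℕ) = k then
      -(2 * ((((j₂ : ℕ) % (k * q)) % q : ℕ) : ℝ) + (if (j₂ : ℕ) < k * q then 0 else 1))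
     else 0)

noncomputable def W3 (k q : ℕ) : Matrix (Fin (k * q)) (Fin (2 * (k * q))) ℝ :=
  fun j j₂ =>
    (if (j₂ : ℕ) = (j : ℕ) then 1 else 0) + (if (j₂ : ℕ) = k * q + (j : ℕ) then -2 else 0)

lemma W2_mulVec (k q : ℕ) (u : Fin (k + 1) → ℝ) (j₂ : Fin (2 * (k * q)))
    (h : ((j₂ : ℕ) % (k * q)) / q < k + 1) :
    (W2 k q).mulVec u j₂ =
      u ⟨((j₂ : ℕ) % (k * q)) / q, h⟩
        - (2 * ((((j₂ : ℕ) % (k * q)) % q : ℕ) : ℝ)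
            + (if (j₂ : ℕ) < k * q then 0 else 1)) * u ⟨k, Nat.lt_succ_self k⟩ := by
  simp only [Matrix.mulVec, dotProduct, W2, add_mul, Finset.sum_add_distrib]
  rw [sum_single_ite u _ h, sum_single_ite u k (Nat.lt_succ_self k)]
  ring

lemma W3_mulVec (k q : ℕ) (u : Fin (2 * (k * q)) → ℝ) (j : Fin (k * q))
    (h1 : (j : ℕ) < 2 * (k * q)) (h2 : k * q + (j : ℕ) < 2 * (k * q)) :
    (W3 k q).mulVec u j = u ⟨j, h1⟩ - 2 * u ⟨k * q + (j : ℕ), h2⟩ := by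
  simp only [Matrix.mulVec, dotProduct, W3, add_mul, Finset.sum_add_distrib]
  rw [sum_single_ite u _ h1, sum_single_ite u _ h2]
  ring

open Finset in
/-- for `d = k q`, there is a 3-layer ReLU network
`G : ℝ^(k+1) → ℝ^d` with no offsets whose range contains every nonnegative
`k`-group sparse vector of the unit Euclidean ball; moreover each such vector is
obtained as `G([x₁, …, x_k, 1])` for some `x₁, …, x_k ≥ 0`. -/
theorem stmt_4 (k q : ℕ) (hk : 0 < k) (hq : 0 < q) :
    ∃ (d₁ d₂ : ℕ) (W₁ : Matrix (Fin d₁) (Fin (k + 1)) ℝ)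
      (W₂ : Matrix (Fin d₂) (Fin d₁) ℝ)
      (W₃ : Matrix (Fin (k * q)) (Fin d₂) ℝ),
      ∀ v : Fin (k * q) → ℝ,
        (∀ j, 0 ≤ v j) →
        (∀ i : Fin k, ∃! r : Fin q, v (blockIdx i r) ≠ 0) →
        (∑ j, v j ^ 2 ≤ 1) →
        ∃ x : Fin k → ℝ, (∀ i, 0 ≤ x i) ∧
          (fun j => max (W₃.mulVec
            (fun j₂ => max (W₂.mulVec
              (fun j₁ => max (W₁.mulVec (Fin.snoc x 1) j₁) 0) j₂) 0) j) 0) = v := by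
  have hn : 0 < k * q := Nat.mul_pos hk hq
  refine ⟨k + 1, 2 * (k * q), 1, W2 k q, W3 k q, ?_⟩
  intro v hv hsparse hnorm
  choose rI hrI huniq using hsparse
  set x : Fin k → ℝ := fun i => 2 * ((rI i : ℕ) : ℝ) + v (blockIdx i (rI i)) with hx
  have hvle : ∀ j, v j ≤ 1 := by
    intro j
    have h1 : v j ^ 2 ≤ 1 :=
      le_trans (Finset.single_le_sum (fun i _ => sq_nonneg (v i)) (mem_univ j)) hnorm
    nlinarith [hv j]
  have hxnn : ∀ i, 0 ≤ x i := by
    intro i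
    have := hv (blockIdx i (rI i))
    positivity
  refine ⟨x, hxnn, ?_⟩
  -- layer 1 is the identity on nonnegative inputs
  have l1 : (fun j₁ => max ((1 : Matrix (Fin (k+1)) (Fin (k+1)) ℝ).mulVec (Fin.snoc x 1) j₁) 0)
      = Fin.snoc x 1 := by
    funext j₁
    rw [Matrix.one_mulVec]
    refine max_eq_left ?_
    refine Fin.lastCases ?_ ?_ j₁
    · simp
    · intro i; simpa using hxnn i
  rw [l1]
  funext j
  have hjn : (j : ℕ) < k * q := j.2
  have hik : (j : ℕ) / q < k := (Nat.div_lt_iff_lt_mul hq).2 (by omega)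
  have hrq : (j : ℕ) % q < q := Nat.mod_lt _ hq
  set iF : Fin k := ⟨(j : ℕ) / q, hik⟩ with hiF
  set rF : Fin q := ⟨(j : ℕ) % q, hrq⟩ with hrF
  have hblock : blockIdx iF rF = j := by
    exact Fin.ext (Nat.div_add_mod' (j : ℕ) q)
  have h1lt : (j : ℕ) < 2 * (k * q) := by omega
  have h2lt : k * q + (j : ℕ) < 2 * (k * q) := by omega
  rw [W3_mulVec k q _ j h1lt h2lt]
  -- evaluate the hidden layer at the two indices
  have hdiv : ∀ m : ℕ, m < 2 * (k * q) → (m % (k * q)) / q < k + 1 := by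
    intro m hm
    have : m % (k * q) < k * q := Nat.mod_lt _ hn
    exact lt_trans ((Nat.div_lt_iff_lt_mul hq).2 (by omega)) (Nat.lt_succ_self k)
  have e1 : (W2 k q).mulVec (Fin.snoc x 1) ⟨(j : ℕ), h1lt⟩ =
      x iF - 2 * (((j : ℕ) % q : ℕ) : ℝ) := by
    rw [W2_mulVec k q _ _ (hdiv _ h1lt)]
    have hm : ((j : ℕ)) % (k * q) = (j : ℕ) := Nat.mod_eq_of_lt hjn
    have hlast : (⟨k, Nat.lt_succ_self k⟩ : Fin (k+1)) = Fin.last k := rfl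
    have hcast : (⟨((j : ℕ)) % (k * q) / q, hdiv _ h1lt⟩ : Fin (k + 1))
        = Fin.castSucc iF := by
      apply Fin.ext; simp [iF, hm]
    rw [hcast, hlast, Fin.snoc_castSucc, Fin.snoc_last]
    simp [hm, hjn]
  have e2 : (W2 k q).mulVec (Fin.snoc x 1) ⟨k * q + (j : ℕ), h2lt⟩ =
      x iF - (2 * (((j : ℕ) % q : ℕ) : ℝ) + 1) := by
    rw [W2_mulVec k q _ _ (hdiv _ h2lt)]
    have hm : (k * q + (j : ℕ)) % (k * q) = (j : ℕ) := by
      rw [Nat.add_mod_left]; exact Nat.mod_eq_of_lt hjn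
    have hlast : (⟨k, Nat.lt_succ_self k⟩ : Fin (k+1)) = Fin.last k := rfl
    have hcast : (⟨(k * q + (j : ℕ)) % (k * q) / q, hdiv _ h2lt⟩ : Fin (k + 1))
        = Fin.castSucc iF := by
      apply Fin.ext; simp [iF, hm]
    rw [hcast, hlast, Fin.snoc_castSucc, Fin.snoc_last]
    have : ¬ (k * q + (j : ℕ) < k * q) := by omega
    simp [hm, this]
  simp only [e1, e2]
  set t : ℝ := x iF - 2 * (((j : ℕ) % q : ℕ) : ℝ) with ht
  have hsub : x iF - (2 * (((j : ℕ) % q : ℕ) : ℝ) + 1) = t - 1 := by ring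
  rw [hsub]
  have hc0 : 0 ≤ v (blockIdx iF (rI iF)) := hv _
  have hc1 : v (blockIdx iF (rI iF)) ≤ 1 := hvle _
  by_cases hcase : rF = rI iF
  · have hvj : v j = v (blockIdx iF (rI iF)) := by rw [← hcase, hblock]
    have htv : t = v j := by
      have : ((rI iF : ℕ) : ℝ) = (((j : ℕ) % q : ℕ) : ℝ) := by
        rw [← hcase]
      rw [ht, hx, hvj]
      simp only [this]
      ring
    rw [htv]
    exact tri_mid _ (hv j) (hvle j)
  · have hvj : v j = 0 := by
      by_contra hne
      exact hcase (huniq iF rF (by show v (blockIdx iF rF) ≠ 0; rw [hblock]; exact hne))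
    rw [hvj]
    have hne : (rI iF : ℕ) ≠ (j : ℕ) % q := by
      intro h; exact hcase (Fin.ext h.symm)
    have htx : t = 2 * ((rI iF : ℕ) : ℝ) + v (blockIdx iF (rI iF))
        - 2 * (((j : ℕ) % q : ℕ) : ℝ) := by rw [ht, hx]
    rcases Nat.lt_or_ge (rI iF : ℕ) ((j : ℕ) % q) with hlt | hge
    · refine tri_out _ (Or.inl ?_)
      have : ((rI iF : ℕ) : ℝ) + 1 ≤ (((j : ℕ) % q : ℕ) : ℝ) := by
        exact_mod_cast Nat.succ_le_of_lt hlt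
      rw [htx]; linarith
    · have hgt : ((j : ℕ) % q) + 1 ≤ (rI iF : ℕ) := by omega
      refine tri_out _ (Or.inr ?_)
      have : (((j : ℕ) % q : ℕ) : ℝ) + 1 ≤ ((rI iF : ℕ) : ℝ) := by exact_mod_cast hgt
      rw [htx]; linarith
end

section
/- Let K ⊆ ℝ^d contain all k-group sparse vectors in the unit ball (k ≤ d/4, d/k an integer). Then for every 0 < t ≤ 1, the t/10-packing number of K ∩ B₂^d(t) is at least exp(c·k·log(d/k)) for an absolute constant c > 0. -/
/-- `v ∈ ℝ^(k q)` is `k`-group sparse if each of the `k` consecutive blocks of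
size `q` has exactly one nonzero entry. -/
def IsGroupSparse (k q : ℕ) (v : EuclideanSpace ℝ (Fin (k * q))) : Prop :=
  ∀ i : Fin k, ∃! r : Fin q, v (blockIdx i r) ≠ 0

open Finset

section Covering

variable {α : Type*} [Fintype α]

/-- A maximal `R`-independent set is `R`-dominating. -/
theorem exists_pairwise_not_rel_forall_exists_rel (R : α → α → Prop) (hR : ∀ x, R x x)
    (hRs : ∀ x y, R x y → R y x) :
    ∃ C : Finset α, (C : Set α).Pairwise (fun x y => ¬R x y) ∧ ∀ x, ∃ c ∈ C, R x c := by
  classical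
  obtain ⟨C, hC, hmax⟩ := exists_max_image
    ({C | (C : Set α).Pairwise (fun x y => ¬R x y)} : Finset (Finset α)) card
    ⟨∅, by simp⟩
  rw [mem_filter] at hC
  refine ⟨C, hC.2, fun x => ?_⟩
  by_contra! hfar
  have hx : x ∉ C := fun hx => hfar x hx (hR x)
  have hins : ((insert x C : Finset α) : Set α).Pairwise (fun x y => ¬R x y) := by
    rw [coe_insert]
    exact hC.2.insert fun c hc _ => ⟨hfar c hc, fun h => hfar c hc (hRs _ _ h)⟩
  have := hmax _ (mem_filter.2 ⟨mem_univ _, hins⟩)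
  rw [card_insert_of_notMem hx] at this
  omega

end Covering

section Hamming

variable {ι β : Type*} [Fintype ι] [DecidableEq ι] [Fintype β] [DecidableEq β]

theorem card_filter_hammingDist_le [Nonempty β] (p : ι → β) (r : ℕ) :
    #{g | hammingDist g p ≤ r} ≤ 2 ^ Fintype.card ι * Fintype.card β ^ r := by
  have hsub : ({g | hammingDist g p ≤ r} : Finset (ι → β)) ⊆
      ({S | #S ≤ r} : Finset (Finset ι)).biUnion
        fun S => Fintype.piFinset fun i => if i ∈ S then univ else {p i} := by
    intro g hg
    rw [mem_filter] at hg
    refine mem_biUnion.2 ⟨({i | g i ≠ p i} : Finset ι), mem_filter.2 ⟨mem_univ _, hg.2⟩, ?_⟩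
    rw [Fintype.mem_piFinset]
    intro i
    split_ifs with hi
    · exact mem_univ _
    · simpa using hi
  calc #{g | hammingDist g p ≤ r}
      ≤ ∑ S ∈ ({S | #S ≤ r} : Finset (Finset ι)), Fintype.card β ^ #S := by
        refine (card_le_card hsub).trans (card_biUnion_le.trans (sum_le_sum fun S _ => ?_))
        simp [Fintype.card_piFinset, apply_ite card, prod_ite_mem]
    _ ≤ ∑ S ∈ ({S | #S ≤ r} : Finset (Finset ι)), Fintype.card β ^ r :=
        sum_le_sum fun S hS => Nat.pow_le_pow_right Fintype.card_pos (mem_filter.1 hS).2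
    _ ≤ ∑ _S : Finset ι, Fintype.card β ^ r := sum_le_sum_of_subset (filter_subset _ _)
    _ = 2 ^ Fintype.card ι * Fintype.card β ^ r := by
        simp [Fintype.card_finset]

/-- The Gilbert–Varshamov bound. -/
theorem exists_pairwise_le_hammingDist_and_pow_card_le [Nonempty β] (D : ℕ) :
    ∃ C : Finset (ι → β), (C : Set (ι → β)).Pairwise (fun f g => D ≤ hammingDist f g) ∧
      Fintype.card β ^ Fintype.card ι
        ≤ #C * (2 ^ Fintype.card ι * Fintype.card β ^ (D - 1)) := by
  obtain ⟨C, hsep, hcov⟩ := exists_pairwise_not_rel_forall_exists_rel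
    (fun f g : ι → β => hammingDist f g ≤ D - 1) (fun f => by simp)
    (fun f g h => by rwa [hammingDist_comm] at h)
  refine ⟨C, hsep.mono' fun f g h => by omega, ?_⟩
  have hsub : (univ : Finset (ι → β)) ⊆ C.biUnion fun c => {g | hammingDist g c ≤ D - 1} :=
    fun g _ => by simpa using hcov g
  calc Fintype.card β ^ Fintype.card ι = #(univ : Finset (ι → β)) := by simp
    _ ≤ ∑ c ∈ C, #{g | hammingDist g c ≤ D - 1} := (card_le_card hsub).trans card_biUnion_le
    _ ≤ ∑ _c ∈ C, 2 ^ Fintype.card ι * Fintype.card β ^ (D - 1) :=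
        sum_le_sum fun c _ => card_filter_hammingDist_le c (D - 1)
    _ = #C * (2 ^ Fintype.card ι * Fintype.card β ^ (D - 1)) := by simp

end Hamming

section BlockVectors

variable {k q : ℕ}

theorem blockIdx_eq_finProdFinEquiv (i : Fin k) (r : Fin q) :
    blockIdx i r = finProdFinEquiv (i, r) := by
  ext
  simp [blockIdx, finProdFinEquiv, add_comm, mul_comm]

theorem sum_eq_sum_sum_blockIdx {M : Type*} [AddCommMonoid M] (F : Fin (k * q) → M) :
    ∑ n, F n = ∑ i : Fin k, ∑ r : Fin q, F (blockIdx i r) := by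
  simp only [blockIdx_eq_finProdFinEquiv, ← Fintype.sum_prod_type']
  exact (Fintype.sum_equiv finProdFinEquiv _ _ fun _ => rfl).symm

noncomputable def blockVec (a : ℝ) (f : Fin k → Fin q) : EuclideanSpace ℝ (Fin (k * q)) :=
  WithLp.toLp 2 fun n =>
    if (finProdFinEquiv.symm n).2 = f (finProdFinEquiv.symm n).1 then a else 0

theorem blockVec_blockIdx (a : ℝ) (f : Fin k → Fin q) (i : Fin k) (r : Fin q) :
    blockVec a f (blockIdx i r) = if r = f i then a else 0 := by
  rw [blockIdx_eq_finProdFinEquiv]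
  simp only [blockVec, PiLp.toLp_apply, Equiv.symm_apply_apply]

theorem isGroupSparse_blockVec {a : ℝ} (ha : a ≠ 0) (f : Fin k → Fin q) :
    IsGroupSparse k q (blockVec a f) := fun i =>
  ⟨f i, by simp [blockVec_blockIdx, ha], fun r hr => by
    by_contra h
    simp [blockVec_blockIdx, h] at hr⟩

theorem inner_blockVec (a : ℝ) (f g : Fin k → Fin q) :
    inner ℝ (blockVec a f) (blockVec a g) = #{i | f i = g i} * a ^ 2 := by
  rw [PiLp.inner_apply, sum_eq_sum_sum_blockIdx]
  simp [blockVec_blockIdx, ite_mul, sum_ite, sq]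

theorem norm_blockVec_sq (a : ℝ) (f : Fin k → Fin q) : ‖blockVec a f‖ ^ 2 = k * a ^ 2 := by
  rw [← real_inner_self_eq_norm_sq, inner_blockVec]
  simp

theorem dist_blockVec_sq (a : ℝ) (f g : Fin k → Fin q) :
    dist (blockVec a f) (blockVec a g) ^ 2 = 2 * hammingDist f g * a ^ 2 := by
  have hsplit : (#{i | f i = g i} + hammingDist f g : ℝ) = k := by
    exact_mod_cast (card_filter_add_card_filter_not (s := univ) fun i => f i = g i).trans
      (card_fin k)
  rw [dist_eq_norm, norm_sub_sq_real, norm_blockVec_sq, norm_blockVec_sq, inner_blockVec]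
  linear_combination (-2 * a ^ 2) * hsplit

end BlockVectors

theorem exp_mul_log_le_of_pow_le {k q m N : ℕ} (hq : 4 ≤ q) (hm : 4 * m ≤ k)
    (h : q ^ k ≤ N * (2 ^ k * q ^ m)) : Real.exp (1 / 4 * k * Real.log q) ≤ N := by
  have hN : 0 < N := Nat.pos_of_ne_zero fun hN => by
    simp [hN, show q ≠ 0 by omega] at h
  have hlog : k * Real.log q ≤ Real.log N + (k * Real.log 2 + m * Real.log q) := by
    have := Real.log_le_log (by positivity) (show ((q ^ k : ℕ) : ℝ) ≤ (N * (2 ^ k * q ^ m) : ℕ)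
      by exact_mod_cast h)
    push_cast at this
    rwa [Real.log_mul (by positivity) (by positivity), Real.log_mul (by positivity)
      (by positivity), Real.log_pow, Real.log_pow, Real.log_pow] at this
  have hlog2 : 2 * Real.log 2 ≤ Real.log q := by
    rw [← Real.log_rpow two_pos]
    exact Real.log_le_log (by norm_num) (by norm_num; exact_mod_cast hq)
  have hlogq : 0 ≤ Real.log q := Real.log_nonneg (by norm_cast; omega)
  have hmk : (4 * m : ℝ) ≤ k := by exact_mod_cast hm
  calc Real.exp (1 / 4 * k * Real.log q) ≤ Real.exp (Real.log N) :=
        Real.exp_le_exp.2 (by nlinarith [mul_le_mul_of_nonneg_left hlog2 (Nat.cast_nonneg k),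
          mul_le_mul_of_nonneg_right hmk hlogq])
    _ = N := Real.exp_log (by exact_mod_cast hN)

/-- there is an absolute constant `c > 0` such that if
`K ⊆ ℝ^d` (`d = k q`, `k ≤ d/4`) contains all `k`-group sparse vectors of the
unit ball, then for every `0 < t ≤ 1` the `t/10`-packing number of
`K ∩ B₂^d(t)` is at least `exp(c k log(d/k))`. -/
theorem stmt_7 : ∃ c : ℝ, 0 < c ∧
    ∀ (k q : ℕ), 0 < k → 4 * k ≤ k * q →
    ∀ K : Set (EuclideanSpace ℝ (Fin (k * q))),
    (∀ v : EuclideanSpace ℝ (Fin (k * q)),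
      IsGroupSparse k q v → ‖v‖ ≤ 1 → v ∈ K) →
    ∀ t : ℝ, 0 < t → t ≤ 1 →
    ∃ P : Finset (EuclideanSpace ℝ (Fin (k * q))),
      ↑P ⊆ K ∩ Metric.closedBall 0 t ∧
      (∀ x ∈ P, ∀ y ∈ P, x ≠ y → t / 10 < dist x y) ∧
      Real.exp (c * k * Real.log ((k * q : ℝ) / k)) ≤ P.card := by
  refine ⟨1 / 4, by norm_num, fun k q hk hkq K hK t ht ht1 => ?_⟩
  have hq : 4 ≤ q := Nat.le_of_mul_le_mul_left (by rwa [mul_comm k 4]) hk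
  have : NeZero q := ⟨by omega⟩
  obtain ⟨C, hC, hcard⟩ :=
    exists_pairwise_le_hammingDist_and_pow_card_le (ι := Fin k) (β := Fin q) (k / 200 + 1)
  simp only [Fintype.card_fin, add_tsub_cancel_right] at hcard
  set a := t / √k
  have hk' : (0 : ℝ) < k := by exact_mod_cast hk
  have ha2 : a ^ 2 = t ^ 2 / k := by rw [div_pow, Real.sq_sqrt hk'.le]
  have hnorm (f : Fin k → Fin q) : ‖blockVec a f‖ = t := by
    refine (sq_eq_sq₀ (norm_nonneg _) ht.le).1 ?_
    rw [norm_blockVec_sq, ha2]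
    field_simp
  have hsep : (C : Set (Fin k → Fin q)).Pairwise
      fun f g => t / 10 < dist (blockVec a f) (blockVec a g) := by
    refine hC.mono' fun f g hfg => lt_of_pow_lt_pow_left₀ 2 dist_nonneg ?_
    have : (k : ℝ) < 200 * hammingDist f g := by exact_mod_cast (by omega : k < _)
    rw [dist_blockVec_sq, ha2, mul_div_assoc', lt_div_iff₀ hk']
    nlinarith [mul_lt_mul_of_pos_right this (pow_pos ht 2)]
  have hinj : Set.InjOn (blockVec a) (C : Set (Fin k → Fin q)) := by
    intro f hf g hg hfg
    by_contra hne
    have : t / 10 < dist (blockVec a f) (blockVec a g) := hsep hf hg hne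
    rw [hfg, dist_self] at this
    linarith
  refine ⟨C.image (blockVec a), ?_, ?_, ?_⟩
  · rw [coe_image, Set.image_subset_iff]
    refine fun f _ => ⟨hK _ (isGroupSparse_blockVec (by positivity) f) (hnorm f ▸ ht1), ?_⟩
    simp [hnorm f]
  · have hsepP := (hinj.pairwise_image (r := fun x y => t / 10 < dist x y)).2 hsep
    rwa [← coe_image] at hsepP
  · rw [card_image_of_injOn hinj, mul_div_cancel_left₀ _ hk'.ne']
    exact exp_mul_log_le_of_pow_le hq (by omega) hcard
end

section
/- With ϱ̌₀ = π and ϱ̌ᵢ = g(ϱ̌_{i-1}) where g(ϱ) = arccos(((π-ϱ)cos ϱ + sin ϱ)/π), the quantity ρ_n := Σ_{i=0}^{n-1} (sin ϱ̌ᵢ/π) ∏_{j=i+1}^{n-1} ((π - ϱ̌ⱼ)/π) satisfies 0 < ρ_n ≤ 1 for all n ≥ 2. -/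
/-- `g(ϱ) = arccos(((π - ϱ) cos ϱ + sin ϱ)/π)`. -/
noncomputable def gAngle (ϱ : ℝ) : ℝ :=
  Real.arccos (((Real.pi - ϱ) * Real.cos ϱ + Real.sin ϱ) / Real.pi)

/-- `ρ_n = Σ_{i=0}^{n-1} (sin ϱ̌ᵢ / π) ∏_{j=i+1}^{n-1} ((π - ϱ̌ⱼ)/π)` where
`ϱ̌ᵢ = g^[i](π)`. -/
noncomputable def rhoN (n : ℕ) : ℝ :=
  ∑ i ∈ Finset.range n,
    (Real.sin (gAngle^[i] Real.pi) / Real.pi) *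
      ∏ j ∈ Finset.Ico (i + 1) n, ((Real.pi - gAngle^[j] Real.pi) / Real.pi)

/-!
Peeling off the last factor gives the recursion `ρ_{n+1} = ρ_n (π - ϱ̌ₙ)/π + sin ϱ̌ₙ / π`,
an affine map with nonnegative coefficients. Since `sin ϱ ≤ ϱ`, the coefficients sum to at
most `1`, so `ρ_n ≤ 1` propagates from `ρ_0 = 0`. Positivity starts at `ρ_2 = 1/π` and
propagates because `g` never takes the value `π` on `[0, π]`.
-/

open Real

lemma gAngle_mem_Icc (ϱ : ℝ) : gAngle ϱ ∈ Set.Icc 0 π :=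
  ⟨arccos_nonneg _, arccos_le_pi _⟩

lemma gAngle_lt_pi {ϱ : ℝ} (h0 : 0 ≤ ϱ) (hπ : ϱ ≤ π) : gAngle ϱ < π := by
  have hsin : 0 ≤ sin ϱ := sin_nonneg_of_nonneg_of_le_pi h0 hπ
  have hnum : -π < (π - ϱ) * cos ϱ + sin ϱ := by
    rcases h0.eq_or_lt with rfl | hpos
    · simp [pi_pos]
    · nlinarith [mul_nonneg (sub_nonneg.mpr hπ) (neg_one_le_cos ϱ |> neg_le_iff_add_nonneg.mp)]
  exact arccos_lt_pi.mpr <| (lt_div_iff₀ pi_pos).mpr (by linarith)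

lemma iterate_gAngle_mem_Icc (i : ℕ) : gAngle^[i] π ∈ Set.Icc 0 π := by
  cases i with
  | zero => exact ⟨pi_pos.le, le_rfl⟩
  | succ k => rw [Function.iterate_succ_apply']; exact gAngle_mem_Icc _

lemma iterate_gAngle_lt_pi {i : ℕ} (hi : 1 ≤ i) : gAngle^[i] π < π := by
  obtain ⟨k, rfl⟩ := Nat.exists_eq_add_of_le' hi
  rw [Function.iterate_succ_apply']
  exact gAngle_lt_pi (iterate_gAngle_mem_Icc k).1 (iterate_gAngle_mem_Icc k).2

lemma rhoN_succ (n : ℕ) :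
    rhoN (n + 1) = rhoN n * ((π - gAngle^[n] π) / π) + sin (gAngle^[n] π) / π := by
  rw [rhoN, Finset.sum_range_succ, Finset.Ico_self, Finset.prod_empty, mul_one, rhoN,
    Finset.sum_mul]
  congr 1
  refine Finset.sum_congr rfl fun i hi => ?_
  rw [Finset.prod_Ico_succ_top (Finset.mem_range.mp hi), mul_assoc]

lemma rhoN_two : rhoN 2 = 1 / π := by
  have hϱ₁ : gAngle^[1] π = π / 2 := by simp [gAngle]
  rw [rhoN_succ, rhoN_succ, hϱ₁]
  simp [rhoN]

lemma affine_step_le_one {r ϱ : ℝ} (hr : r ≤ 1) (h0 : 0 ≤ ϱ) (hπ : ϱ ≤ π) :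
    r * ((π - ϱ) / π) + sin ϱ / π ≤ 1 := by
  have hcoef : 0 ≤ (π - ϱ) / π := div_nonneg (sub_nonneg.mpr hπ) pi_pos.le
  calc r * ((π - ϱ) / π) + sin ϱ / π
      ≤ 1 * ((π - ϱ) / π) + ϱ / π := by
        gcongr
        exact sin_le h0
    _ = 1 := by field_simp; ring

lemma affine_step_pos {r ϱ : ℝ} (hr : 0 < r) (h0 : 0 ≤ ϱ) (hπ : ϱ < π) :
    0 < r * ((π - ϱ) / π) + sin ϱ / π := by
  have hsin : 0 ≤ sin ϱ / π := div_nonneg (sin_nonneg_of_nonneg_of_le_pi h0 hπ.le) pi_pos.le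
  have hcoef : 0 < (π - ϱ) / π := div_pos (sub_pos.mpr hπ) pi_pos
  positivity

lemma rhoN_le_one (n : ℕ) : rhoN n ≤ 1 := by
  induction n with
  | zero => simp [rhoN]
  | succ n ih =>
    rw [rhoN_succ]
    exact affine_step_le_one ih (iterate_gAngle_mem_Icc n).1 (iterate_gAngle_mem_Icc n).2

lemma rhoN_pos {n : ℕ} (hn : 2 ≤ n) : 0 < rhoN n := by
  induction n, hn using Nat.le_induction with
  | base => rw [rhoN_two]; positivity
  | succ n hn ih =>
    rw [rhoN_succ]
    exact affine_step_pos ih (iterate_gAngle_mem_Icc n).1 (iterate_gAngle_lt_pi (by omega))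

/-- `0 < ρ_n ≤ 1` for all `n ≥ 2`. -/
theorem stmt_17 (n : ℕ) (hn : 2 ≤ n) : 0 < rhoN n ∧ rhoN n ≤ 1 :=
  ⟨rhoN_pos hn, rhoN_le_one n⟩
end
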